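/- arXiv:2312.08823 — 5 statements merged into one kernel-verified Lean document; each statement's English description precedes it below -/
import Mathlib

section
/- Let M be a real symmetric positive definite d×d matrix and let s ∈ [0, 1) be such that (1 − s)²·I ⪯ M ⪯ (1 − s)^{−2}·I in the Loewner order (I the d×d identity). Then trace(M) − d − log det(M) ≤ 4·d·s²/(1 − s)². -/
/-!
Diagonalising `M`, the quantity `trace M - d - log det M` is `∑ᵢ (λᵢ - 1 - log λᵢ)` over the
eigenvalues, and the Loewner bounds place each `λᵢ` in `[a, a⁻¹]` with `a = (1 - s)²`. Since
`log x ≥ 1 - x⁻¹`, each term is at most `x + x⁻¹ - 2 ≤ a + a⁻¹ - 2 = s²(2 - s)²/(1 - s)²`.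
-/

open Matrix Finset

lemma sub_one_sub_log_le_add_inv_sub_two {a x : ℝ} (ha : 0 < a) (hax : a ≤ x) (hxa : x ≤ a⁻¹) :
    x - 1 - Real.log x ≤ a + a⁻¹ - 2 := by
  have hx : 0 < x := ha.trans_le hax
  have hlog : 1 - x⁻¹ ≤ Real.log x := Real.one_sub_inv_le_log_of_pos hx
  -- `x ↦ x + x⁻¹` is largest at the endpoints of `[a, a⁻¹]`, where it equals `a + a⁻¹`
  have hconv : x + x⁻¹ ≤ a + a⁻¹ := by
    have h : (x - a) * (x - a⁻¹) ≤ 0 :=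
      mul_nonpos_of_nonneg_of_nonpos (by linarith) (by linarith)
    rw [← mul_le_mul_iff_of_pos_left hx]
    field_simp
    nlinarith [mul_inv_cancel₀ ha.ne']
  linarith

lemma sq_one_sub_add_inv_sub_two_le {s : ℝ} (hs0 : 0 ≤ s) (hs1 : s < 1) :
    (1 - s) ^ 2 + ((1 - s) ^ 2)⁻¹ - 2 ≤ 4 * s ^ 2 / (1 - s) ^ 2 := by
  have hne : 1 - s ≠ 0 := by linarith
  rw [← sub_nonneg]
  have : 4 * s ^ 2 / (1 - s) ^ 2 - ((1 - s) ^ 2 + ((1 - s) ^ 2)⁻¹ - 2)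
      = s ^ 3 * (4 - s) / (1 - s) ^ 2 := by
    field_simp; ring
  rw [this]
  have : 0 ≤ 4 - s := by linarith
  positivity

namespace Matrix.IsHermitian

variable {n : Type*} [Fintype n] [DecidableEq n] {A : Matrix n n ℝ} (hA : A.IsHermitian)

lemma dotProduct_sub_smul_one_mulVec_eigenvectorBasis (c : ℝ) (i : n) :
    hA.eigenvectorBasis i ⬝ᵥ ((A - c • 1) *ᵥ hA.eigenvectorBasis i) = hA.eigenvalues i - c := by
  have hunit : hA.eigenvectorBasis i ⬝ᵥ hA.eigenvectorBasis i = 1 := by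
    have h := real_inner_self_eq_norm_sq (hA.eigenvectorBasis i)
    rw [hA.eigenvectorBasis.orthonormal.1 i, EuclideanSpace.inner_eq_star_dotProduct] at h
    simpa [dotProduct_comm] using h
  rw [hA.eigenvalues_eq i, sub_mulVec, dotProduct_sub, smul_mulVec, one_mulVec, dotProduct_smul,
    hunit]
  simp

lemma le_eigenvalues_of_posSemidef_sub_smul_one {c : ℝ} (h : (A - c • 1).PosSemidef) (i : n) :
    c ≤ hA.eigenvalues i := by
  have := h.dotProduct_mulVec_nonneg (hA.eigenvectorBasis i)
  rw [star_trivial, hA.dotProduct_sub_smul_one_mulVec_eigenvectorBasis] at this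
  linarith

lemma eigenvalues_le_of_posSemidef_smul_one_sub {c : ℝ} (h : (c • 1 - A).PosSemidef) (i : n) :
    hA.eigenvalues i ≤ c := by
  have := h.dotProduct_mulVec_nonneg (hA.eigenvectorBasis i)
  rw [star_trivial, ← neg_sub, neg_mulVec, dotProduct_neg,
    hA.dotProduct_sub_smul_one_mulVec_eigenvectorBasis] at this
  linarith

lemma trace_sub_card_sub_log_det (hne : ∀ i, hA.eigenvalues i ≠ 0) :
    A.trace - Fintype.card n - Real.log A.det
      = ∑ i, (hA.eigenvalues i - 1 - Real.log (hA.eigenvalues i)) := by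
  rw [hA.trace_eq_sum_eigenvalues, hA.det_eq_prod_eigenvalues]
  simp only [RCLike.ofReal_real_eq_id, id, Real.log_prod fun i _ => hne i, sum_sub_distrib,
    sum_const, card_univ, nsmul_eq_mul, mul_one]

end Matrix.IsHermitian

theorem stmt5_general (d : ℕ) (M : Matrix (Fin d) (Fin d) ℝ) (s : ℝ)
    (hs0 : 0 ≤ s) (hs1 : s < 1)
    (hlow : (M - (1 - s) ^ 2 • (1 : Matrix (Fin d) (Fin d) ℝ)).PosSemidef)
    (hupp : ((((1 - s) ^ 2)⁻¹ • (1 : Matrix (Fin d) (Fin d) ℝ)) - M).PosSemidef) :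
    M.trace - d - Real.log M.det ≤ 4 * d * s ^ 2 / (1 - s) ^ 2 := by
  have hM : M.IsHermitian := by
    convert hlow.isHermitian.add (isHermitian_one.smul (IsSelfAdjoint.all ((1 - s) ^ 2))) using 1
    exact (sub_add_cancel _ _).symm
  have hpos : 0 < (1 - s) ^ 2 := by nlinarith
  have hlo := hM.le_eigenvalues_of_posSemidef_sub_smul_one hlow
  have hhi := hM.eigenvalues_le_of_posSemidef_smul_one_sub hupp
  have htrace := hM.trace_sub_card_sub_log_det fun i ↦ (hpos.trans_le (hlo i)).ne'
  rw [Fintype.card_fin] at htrace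
  rw [htrace]
  calc ∑ i, (hM.eigenvalues i - 1 - Real.log (hM.eigenvalues i))
      ≤ ∑ _i : Fin d, 4 * s ^ 2 / (1 - s) ^ 2 := sum_le_sum fun i _ ↦
        (sub_one_sub_log_le_add_inv_sub_two hpos (hlo i) (hhi i)).trans
          (sq_one_sub_add_inv_sub_two_le hs0 hs1)
    _ = 4 * d * s ^ 2 / (1 - s) ^ 2 := by
        simp only [sum_const, card_univ, Fintype.card_fin, nsmul_eq_mul]
        ring

/-- If `M` is symmetric positive definite with `(1 − s)²·I ⪯ M ⪯ (1 − s)⁻²·I`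
for `s ∈ [0, 1)`, then `trace M − d − log det M ≤ 4·d·s²/(1 − s)²`. -/
theorem stmt5 (d : ℕ) (M : Matrix (Fin d) (Fin d) ℝ) (hM : M.PosDef) (s : ℝ)
    (hs0 : 0 ≤ s) (hs1 : s < 1)
    (hlow : (M - (1 - s) ^ 2 • (1 : Matrix (Fin d) (Fin d) ℝ)).PosSemidef)
    (hupp : ((((1 - s) ^ 2)⁻¹ • (1 : Matrix (Fin d) (Fin d) ℝ)) - M).PosSemidef) :
    M.trace - d - Real.log M.det ≤ 4 * d * s ^ 2 / (1 - s) ^ 2 :=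
  stmt5_general d M s hs0 hs1 hlow hupp
end

section
/- Let m, d ≥ 1, and for each i ∈ {1,…,m} let M_i be a real symmetric positive definite d×d matrix and c_i ∈ ℝ^d. Let K = {z ∈ ℝ^d : ‖z − c_i‖²_{M_i} ≤ 1 for all i}, and let x ∈ ℝ^d satisfy ‖x − c_i‖²_{M_i} < 1 for all i. Define Q_x(y) = Σ_{i=1}^m [2·(1 − ‖x − c_i‖²_{M_i})·‖y − x‖²_{M_i} + 4·⟨y − x, x − c_i⟩²_{M_i}] / (1 − ‖x − c_i‖²_{M_i})². Then: (a) every y ∈ ℝ^d with Q_x(y) ≤ 1 satisfies y ∈ K and 2x − y ∈ K; and (b) every y ∈ ℝ^d with y ∈ K and 2x − y ∈ K satisfies Q_x(y) ≤ 2m. -/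
open Matrix

/-
For one ellipsoid write `t = 1 - ‖x - c‖²_M > 0`, `a = ‖h‖²_M` and `b = ⟨h, x - c⟩_M`, with
`h = y - x`. Then `‖x ± h - c‖²_M ≤ 1` says `a ± 2b ≤ t`, while the `i`-th term of `Q_x(y)` is
`(2ta + 4b²)/t²`. Both inclusions reduce to comparing `4b²` with `(t - a)²`: a term at most `1`
forces `a ≤ t` and `4b² ≤ (t - a)²`, and conversely `|2b| ≤ t - a` bounds the term by
`(t² + a²)/t² ≤ 2`. Summing over the `m` ellipsoids gives the factor `m`.
-/

section QuadraticForm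

variable {n R : Type*} [Fintype n] [CommRing R] {M : Matrix n n R}

lemma Matrix.IsSymm.dotProduct_mulVec_comm (hM : M.IsSymm) (u w : n → R) :
    u ⬝ᵥ M *ᵥ w = w ⬝ᵥ M *ᵥ u := by
  rw [← dotProduct_transpose_mulVec, hM.eq]

lemma Matrix.IsSymm.quadForm_add (hM : M.IsSymm) (u w : n → R) :
    (u + w) ⬝ᵥ M *ᵥ (u + w) = u ⬝ᵥ M *ᵥ u + 2 * (w ⬝ᵥ M *ᵥ u) + w ⬝ᵥ M *ᵥ w := by
  simp only [mulVec_add, add_dotProduct, dotProduct_add, hM.dotProduct_mulVec_comm u w]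
  ring

lemma Matrix.IsSymm.quadForm_sub (hM : M.IsSymm) (u w : n → R) :
    (u - w) ⬝ᵥ M *ᵥ (u - w) = u ⬝ᵥ M *ᵥ u - 2 * (w ⬝ᵥ M *ᵥ u) + w ⬝ᵥ M *ᵥ w := by
  simp only [mulVec_sub, sub_dotProduct, dotProduct_sub, hM.dotProduct_mulVec_comm u w]
  ring

end QuadraticForm

lemma Matrix.PosSemidef.isSymm_of_real {n : Type*} {M : Matrix n n ℝ} (hM : M.PosSemidef) :
    M.IsSymm := by
  change Mᵀ = M
  simpa [IsHermitian, conjTranspose_eq_transpose_of_trivial] using hM.1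

lemma Matrix.PosSemidef.quadForm_nonneg_of_real {n : Type*} [Fintype n] {M : Matrix n n ℝ}
    (hM : M.PosSemidef) (h : n → ℝ) : 0 ≤ h ⬝ᵥ M *ᵥ h := by
  simpa using hM.dotProduct_mulVec_nonneg h

lemma abs_two_mul_le_sub_of_two_mul_mul_add_sq_le {t a b : ℝ} (ht : 0 < t) (ha : 0 ≤ a)
    (h : 2 * t * a + 4 * b ^ 2 ≤ t ^ 2) : |2 * b| ≤ t - a := by
  have hat : 2 * a ≤ t := by nlinarith [sq_nonneg b]
  exact abs_le_of_sq_le_sq (by nlinarith) (by linarith)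

lemma two_mul_mul_add_sq_le_two_mul_sq {t a b : ℝ} (ha : 0 ≤ a) (hplus : a + 2 * b ≤ t)
    (hminus : a - 2 * b ≤ t) : 2 * t * a + 4 * b ^ 2 ≤ 2 * t ^ 2 := by
  nlinarith [mul_nonneg (sub_nonneg.mpr hplus) (sub_nonneg.mpr hminus)]

section DikinTerm

variable {n : Type*} [Fintype n] {M : Matrix n n ℝ}

/-- The contribution of the ellipsoid `‖· - c‖²_M ≤ 1` to `Q_x(y)`, with `u = x - c`, `h = y - x`. -/
noncomputable def dikinTerm (M : Matrix n n ℝ) (u h : n → ℝ) : ℝ :=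
  (2 * (1 - u ⬝ᵥ M *ᵥ u) * (h ⬝ᵥ M *ᵥ h) + 4 * (h ⬝ᵥ M *ᵥ u) ^ 2) / (1 - u ⬝ᵥ M *ᵥ u) ^ 2

lemma dikinTerm_nonneg (hM : M.PosSemidef) {u : n → ℝ} (hu : u ⬝ᵥ M *ᵥ u ≤ 1) (h : n → ℝ) :
    0 ≤ dikinTerm M u h := by
  have ha := hM.quadForm_nonneg_of_real h
  have ht := sub_nonneg.mpr hu
  unfold dikinTerm
  positivity

lemma quadForm_add_le_one_of_dikinTerm_le_one (hM : M.PosSemidef) {u h : n → ℝ}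
    (hu : u ⬝ᵥ M *ᵥ u < 1) (hQ : dikinTerm M u h ≤ 1) :
    (u + h) ⬝ᵥ M *ᵥ (u + h) ≤ 1 ∧ (u - h) ⬝ᵥ M *ᵥ (u - h) ≤ 1 := by
  have ht : 0 < 1 - u ⬝ᵥ M *ᵥ u := sub_pos.mpr hu
  have ha := hM.quadForm_nonneg_of_real h
  have hb := abs_le.mp <| abs_two_mul_le_sub_of_two_mul_mul_add_sq_le ht ha <|
    (div_le_one (by positivity)).mp hQ
  rw [hM.isSymm_of_real.quadForm_add, hM.isSymm_of_real.quadForm_sub]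
  constructor <;> linarith [hb.1, hb.2]

lemma dikinTerm_le_two (hM : M.PosSemidef) {u h : n → ℝ} (hu : u ⬝ᵥ M *ᵥ u < 1)
    (hplus : (u + h) ⬝ᵥ M *ᵥ (u + h) ≤ 1) (hminus : (u - h) ⬝ᵥ M *ᵥ (u - h) ≤ 1) :
    dikinTerm M u h ≤ 2 := by
  have ht : 0 < 1 - u ⬝ᵥ M *ᵥ u := sub_pos.mpr hu
  have ha := hM.quadForm_nonneg_of_real h
  rw [hM.isSymm_of_real.quadForm_add] at hplus
  rw [hM.isSymm_of_real.quadForm_sub] at hminus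
  rw [dikinTerm, div_le_iff₀ (by positivity)]
  exact two_mul_mul_add_sq_le_two_mul_sq ha (by linarith) (by linarith)

end DikinTerm

theorem stmt9_general (m d : ℕ)
    (M : Fin m → Matrix (Fin d) (Fin d) ℝ) (hM : ∀ i, (M i).PosDef)
    (c : Fin m → Fin d → ℝ) (x : Fin d → ℝ)
    (hx : ∀ i, (x - c i) ⬝ᵥ (M i) *ᵥ (x - c i) < 1) :
    (∀ y : Fin d → ℝ,
      (∑ i, (2 * (1 - (x - c i) ⬝ᵥ (M i) *ᵥ (x - c i)) * ((y - x) ⬝ᵥ (M i) *ᵥ (y - x))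
          + 4 * ((y - x) ⬝ᵥ (M i) *ᵥ (x - c i)) ^ 2)
          / (1 - (x - c i) ⬝ᵥ (M i) *ᵥ (x - c i)) ^ 2) ≤ 1 →
      (∀ i, (y - c i) ⬝ᵥ (M i) *ᵥ (y - c i) ≤ 1) ∧
      (∀ i, (2 • x - y - c i) ⬝ᵥ (M i) *ᵥ (2 • x - y - c i) ≤ 1)) ∧
    (∀ y : Fin d → ℝ,
      (∀ i, (y - c i) ⬝ᵥ (M i) *ᵥ (y - c i) ≤ 1) →
      (∀ i, (2 • x - y - c i) ⬝ᵥ (M i) *ᵥ (2 • x - y - c i) ≤ 1) →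
      (∑ i, (2 * (1 - (x - c i) ⬝ᵥ (M i) *ᵥ (x - c i)) * ((y - x) ⬝ᵥ (M i) *ᵥ (y - x))
          + 4 * ((y - x) ⬝ᵥ (M i) *ᵥ (x - c i)) ^ 2)
          / (1 - (x - c i) ⬝ᵥ (M i) *ᵥ (x - c i)) ^ 2) ≤ 2 * (m : ℝ)) := by
  have hplus (y : Fin d → ℝ) (i : Fin m) : y - c i = (x - c i) + (y - x) := by abel
  have hminus (y : Fin d → ℝ) (i : Fin m) : 2 • x - y - c i = (x - c i) - (y - x) := by
    rw [two_nsmul]; abel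
  refine ⟨fun y hQ => ?_, fun y hK hK' => ?_⟩
  · have hterm (i : Fin m) : dikinTerm (M i) (x - c i) (y - x) ≤ 1 :=
      (Finset.single_le_sum (fun j _ => dikinTerm_nonneg (hM j).posSemidef (hx j).le (y - x))
        (Finset.mem_univ i)).trans hQ
    have hK i := quadForm_add_le_one_of_dikinTerm_le_one (hM i).posSemidef (hx i) (hterm i)
    exact ⟨fun i => hplus y i ▸ (hK i).1, fun i => hminus y i ▸ (hK i).2⟩
  · calc ∑ i, dikinTerm (M i) (x - c i) (y - x)
        ≤ ∑ _i : Fin m, (2 : ℝ) := Finset.sum_le_sum fun i _ =>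
          dikinTerm_le_two (hM i).posSemidef (hx i) (hplus y i ▸ hK i) (hminus y i ▸ hK' i)
      _ = 2 * m := by simp [mul_comm]

/-- The log-barrier of an intersection of `m` ellipsoids is a symmetric barrier
with parameter `2m`: the unit Dikin ellipsoid at `x` is contained in
`K ∩ (2x − K)`, which is contained in the Dikin ellipsoid of radius `√(2m)`. -/
theorem stmt9 (m d : ℕ) (hm : 1 ≤ m) (hd : 1 ≤ d)
    (M : Fin m → Matrix (Fin d) (Fin d) ℝ) (hM : ∀ i, (M i).PosDef)
    (c : Fin m → Fin d → ℝ) (x : Fin d → ℝ)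
    (hx : ∀ i, (x - c i) ⬝ᵥ (M i) *ᵥ (x - c i) < 1) :
    (∀ y : Fin d → ℝ,
      (∑ i, (2 * (1 - (x - c i) ⬝ᵥ (M i) *ᵥ (x - c i)) * ((y - x) ⬝ᵥ (M i) *ᵥ (y - x))
          + 4 * ((y - x) ⬝ᵥ (M i) *ᵥ (x - c i)) ^ 2)
          / (1 - (x - c i) ⬝ᵥ (M i) *ᵥ (x - c i)) ^ 2) ≤ 1 →
      (∀ i, (y - c i) ⬝ᵥ (M i) *ᵥ (y - c i) ≤ 1) ∧
      (∀ i, (2 • x - y - c i) ⬝ᵥ (M i) *ᵥ (2 • x - y - c i) ≤ 1)) ∧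
    (∀ y : Fin d → ℝ,
      (∀ i, (y - c i) ⬝ᵥ (M i) *ᵥ (y - c i) ≤ 1) →
      (∀ i, (2 • x - y - c i) ⬝ᵥ (M i) *ᵥ (2 • x - y - c i) ≤ 1) →
      (∑ i, (2 * (1 - (x - c i) ⬝ᵥ (M i) *ᵥ (x - c i)) * ((y - x) ⬝ᵥ (M i) *ᵥ (y - x))
          + 4 * ((y - x) ⬝ᵥ (M i) *ᵥ (x - c i)) ^ 2)
          / (1 - (x - c i) ⬝ᵥ (M i) *ᵥ (x - c i)) ^ 2) ≤ 2 * (m : ℝ)) :=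
  stmt9_general m d M hM c x hx
end

section
/- Let A ∈ ℝ^{m×d} with rows a_1,…,a_m, let b ∈ ℝ^m, let K = {z ∈ ℝ^d : a_iᵀz ≤ b_i for all i ∈ {1,…,m}}, and let x ∈ ℝ^d satisfy a_iᵀx < b_i for all i. Define Q_x(y) = Σ_{i=1}^m (a_iᵀ(y − x))²/(b_i − a_iᵀx)². Then: (a) every y ∈ ℝ^d with Q_x(y) ≤ 1 satisfies y ∈ K and 2x − y ∈ K; and (b) every y ∈ ℝ^d with y ∈ K and 2x − y ∈ K satisfies Q_x(y) ≤ m. -/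
/-! With slack `sᵢ = bᵢ - aᵢ ⬝ᵥ x > 0`, both `y` and `2x - y` satisfy constraint `i` iff
`|aᵢ ⬝ᵥ (y - x)| ≤ sᵢ`, i.e. iff the `i`-th summand of `Q_x(y)` is at most `1`. Part (a) follows
because each summand is bounded by the sum, part (b) by adding the `m` bounds. -/

section LinearConstraint

variable {R n : Type*} [Field R] [LinearOrder R] [IsStrictOrderedRing R] [Fintype n]

theorem div_sq_le_one_iff_abs_le {t s : R} (hs : 0 < s) : t ^ 2 / s ^ 2 ≤ 1 ↔ |t| ≤ s := by
  rw [div_le_one (by positivity), sq_le_sq, abs_of_pos hs]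

theorem le_and_reflect_le_iff_abs_le (a x y : n → R) (β : R) :
    a ⬝ᵥ y ≤ β ∧ a ⬝ᵥ (2 • x - y) ≤ β ↔ |a ⬝ᵥ (y - x)| ≤ β - a ⬝ᵥ x := by
  simp only [dotProduct_sub, two_smul, dotProduct_add, abs_le]
  constructor <;> rintro ⟨h₁, h₂⟩ <;> constructor <;> linarith

theorem div_sq_slack_le_one_iff {a x : n → R} {β : R} (hx : a ⬝ᵥ x < β) (y : n → R) :
    (a ⬝ᵥ (y - x)) ^ 2 / (β - a ⬝ᵥ x) ^ 2 ≤ 1 ↔ a ⬝ᵥ y ≤ β ∧ a ⬝ᵥ (2 • x - y) ≤ β := by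
  rw [div_sq_le_one_iff_abs_le (sub_pos.2 hx), le_and_reflect_le_iff_abs_le]

end LinearConstraint

theorem stmt10_general (m d : ℕ)
    (a : Fin m → Fin d → ℝ) (b : Fin m → ℝ)
    (x : Fin d → ℝ) (hx : ∀ i, a i ⬝ᵥ x < b i) :
    (∀ y : Fin d → ℝ,
      (∑ i, (a i ⬝ᵥ (y - x)) ^ 2 / (b i - a i ⬝ᵥ x) ^ 2) ≤ 1 →
      (∀ i, a i ⬝ᵥ y ≤ b i) ∧ (∀ i, a i ⬝ᵥ (2 • x - y) ≤ b i)) ∧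
    (∀ y : Fin d → ℝ,
      (∀ i, a i ⬝ᵥ y ≤ b i) → (∀ i, a i ⬝ᵥ (2 • x - y) ≤ b i) →
      (∑ i, (a i ⬝ᵥ (y - x)) ^ 2 / (b i - a i ⬝ᵥ x) ^ 2) ≤ m) := by
  refine ⟨fun y hy => forall_and.1 fun i => ?_, fun y hK hreflK => ?_⟩
  · refine (div_sq_slack_le_one_iff (hx i) y).1 (le_trans ?_ hy)
    exact Finset.single_le_sum (f := fun j => (a j ⬝ᵥ (y - x)) ^ 2 / (b j - a j ⬝ᵥ x) ^ 2)
      (fun j _ => by positivity) (Finset.mem_univ i)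
  · calc (∑ i, (a i ⬝ᵥ (y - x)) ^ 2 / (b i - a i ⬝ᵥ x) ^ 2)
        ≤ ∑ _i : Fin m, (1 : ℝ) :=
          Finset.sum_le_sum fun i _ => (div_sq_slack_le_one_iff (hx i) y).2 ⟨hK i, hreflK i⟩
      _ = m := by simp

/-- The log-barrier of a polytope given by `m` linear inequality constraints is
a symmetric barrier with parameter `m`: the unit Dikin ellipsoid at `x` is
contained in `K ∩ (2x − K)`, which is contained in the Dikin ellipsoid of
radius `√m`. Here `a i` is the `i`-th row of the constraint matrix. -/
theorem stmt10 (m d : ℕ) (hm : 1 ≤ m) (hd : 1 ≤ d)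
    (a : Fin m → Fin d → ℝ) (b : Fin m → ℝ)
    (x : Fin d → ℝ) (hx : ∀ i, a i ⬝ᵥ x < b i) :
    (∀ y : Fin d → ℝ,
      (∑ i, (a i ⬝ᵥ (y - x)) ^ 2 / (b i - a i ⬝ᵥ x) ^ 2) ≤ 1 →
      (∀ i, a i ⬝ᵥ y ≤ b i) ∧ (∀ i, a i ⬝ᵥ (2 • x - y) ≤ b i)) ∧
    (∀ y : Fin d → ℝ,
      (∀ i, a i ⬝ᵥ y ≤ b i) → (∀ i, a i ⬝ᵥ (2 • x - y) ≤ b i) →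
      (∑ i, (a i ⬝ᵥ (y - x)) ^ 2 / (b i - a i ⬝ᵥ x) ^ 2) ≤ m) :=
  stmt10_general m d a b x hx
end

section
/- For every y ∈ ℝ^d there exists a unique x ∈ ℝ^d with x_i > 0 for all i ∈ {1,…,d} and Σ_{i=1}^d x_i < 1 such that y_i = −1/x_i + 1/(1 − Σ_{j=1}^d x_j) for every i ∈ {1,…,d}. -/
/-!
Put `t = 1 / (1 - ∑ j, x j)`. The equations say `t - y i = 1 / x i`, so `x i = 1 / (t - y i)`,
and the remaining constraint `1 - ∑ i, x i = 1 / t` becomes the secular equation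
`1 / t + ∑ i, 1 / (t - y i) = 1` for `t` to the right of all the poles `0, y 1, …, y d`.
There the left side is continuous and strictly decreasing, at least `1` one unit to the right
of the largest pole and at most `1` far to the right, so it has exactly one root.
-/

open Finset

noncomputable section

section Secular

variable {κ : Type*} [Fintype κ] (z : κ → ℝ)

def secularFun (t : ℝ) : ℝ := ∑ j, 1 / (t - z j)

lemma secularFun_strictAntiOn [Nonempty κ] : StrictAntiOn (secularFun z) {t | ∀ j, z j < t} :=
  fun s hs t _ hst => sum_lt_sum_of_nonempty univ_nonempty fun j _ =>
    one_div_lt_one_div_of_lt (sub_pos.2 (hs j)) (by linarith)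

lemma secularFun_continuousOn : ContinuousOn (secularFun z) {t | ∀ j, z j < t} :=
  continuousOn_finsetSum _ fun j _ => continuousOn_const.div (by fun_prop)
    fun t ht => (sub_pos.2 (ht j)).ne'

variable [Nonempty κ]

lemma one_le_secularFun_sup'_add_one : 1 ≤ secularFun z (univ.sup' univ_nonempty z + 1) := by
  obtain ⟨k, -, hk⟩ := exists_mem_eq_sup' univ_nonempty z
  have hpos : ∀ j ∈ univ, 0 ≤ 1 / (univ.sup' univ_nonempty z + 1 - z j) := fun j _ => by
    have := le_sup' z (mem_univ j)
    exact one_div_nonneg.2 (by linarith)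
  calc (1 : ℝ) = 1 / (univ.sup' univ_nonempty z + 1 - z k) := by rw [hk]; ring
    _ ≤ secularFun z (univ.sup' univ_nonempty z + 1) := single_le_sum hpos (mem_univ k)

lemma secularFun_sup'_add_card_le_one :
    secularFun z (univ.sup' univ_nonempty z + Fintype.card κ) ≤ 1 := by
  have hcard : (0 : ℝ) < Fintype.card κ := by exact_mod_cast Fintype.card_pos
  calc secularFun z (univ.sup' univ_nonempty z + Fintype.card κ)
      ≤ Fintype.card κ • (1 / (Fintype.card κ : ℝ)) := by
        refine sum_le_card_nsmul _ _ _ fun j _ => one_div_le_one_div_of_le hcard ?_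
        linarith [le_sup' z (mem_univ j)]
    _ = 1 := by rw [nsmul_eq_mul]; field_simp

lemma existsUnique_secularFun_eq_one : ∃! t, (∀ j, z j < t) ∧ secularFun z t = 1 := by
  set M := univ.sup' univ_nonempty z
  have hcard : (1 : ℝ) ≤ Fintype.card κ := by exact_mod_cast Fintype.card_pos
  have hIcc : Set.Icc (M + 1) (M + Fintype.card κ) ⊆ {t | ∀ j, z j < t} :=
    fun t ht j => by linarith [le_sup' z (mem_univ j), ht.1]
  obtain ⟨t, ht, hroot⟩ := intermediate_value_Icc' (by linarith)
    ((secularFun_continuousOn z).mono hIcc)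
    ⟨secularFun_sup'_add_card_le_one z, one_le_secularFun_sup'_add_one z⟩
  exact ⟨t, ⟨hIcc ht, hroot⟩, fun s hs =>
    (secularFun_strictAntiOn z).injOn hs.1 (hIcc ht) (hs.2.trans hroot.symm)⟩

end Secular

section Simplex

variable {ι : Type*}

def barrierPoles (y : ι → ℝ) : Option ι → ℝ := fun j => j.elim 0 y

lemma forall_barrierPoles_lt_iff (y : ι → ℝ) (t : ℝ) :
    (∀ j, barrierPoles y j < t) ↔ 0 < t ∧ ∀ i, y i < t := by
  simp [barrierPoles, Option.forall]

variable [Fintype ι]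

lemma secularFun_barrierPoles (y : ι → ℝ) (t : ℝ) :
    secularFun (barrierPoles y) t = 1 / t + ∑ i, 1 / (t - y i) := by
  simp [secularFun, barrierPoles, Fintype.sum_option]

def openSimplex : Set (ι → ℝ) := {x | (∀ i, 0 < x i) ∧ ∑ i, x i < 1}

def simplexBarrierGrad (x : ι → ℝ) : ι → ℝ := fun i => -(1 / x i) + 1 / (1 - ∑ j, x j)

lemma eq_one_div_sub_simplexBarrierGrad (x : ι → ℝ) (i : ι) :
    x i = 1 / (1 / (1 - ∑ j, x j) - simplexBarrierGrad x i) := by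
  simp [simplexBarrierGrad]

lemma isRoot_of_mem_openSimplex {x : ι → ℝ} (hx : x ∈ openSimplex) :
    (∀ j, barrierPoles (simplexBarrierGrad x) j < 1 / (1 - ∑ j, x j)) ∧
      secularFun (barrierPoles (simplexBarrierGrad x)) (1 / (1 - ∑ j, x j)) = 1 := by
  have hs : 0 < 1 - ∑ j, x j := sub_pos.2 hx.2
  refine ⟨(forall_barrierPoles_lt_iff _ _).2 ⟨by positivity, fun i => ?_⟩, ?_⟩
  · simp only [simplexBarrierGrad]
    linarith [one_div_pos.2 (hx.1 i)]
  · rw [secularFun_barrierPoles, ← Fintype.sum_congr _ _ (eq_one_div_sub_simplexBarrierGrad x),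
      one_div_one_div]
    ring

lemma simplexBarrierGrad_injOn : Set.InjOn (simplexBarrierGrad (ι := ι)) openSimplex := by
  intro x hx x' hx' hxx'
  have hroot := isRoot_of_mem_openSimplex hx
  rw [hxx'] at hroot
  have ht := (existsUnique_secularFun_eq_one _).unique hroot (isRoot_of_mem_openSimplex hx')
  funext i
  rw [eq_one_div_sub_simplexBarrierGrad x, eq_one_div_sub_simplexBarrierGrad x', ht, hxx']

lemma simplexBarrierGrad_surjOn :
    Set.SurjOn (simplexBarrierGrad (ι := ι)) openSimplex Set.univ := by
  intro y _
  obtain ⟨t, ⟨hpoles, hroot⟩, -⟩ := existsUnique_secularFun_eq_one (barrierPoles y)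
  obtain ⟨ht, hyt⟩ := (forall_barrierPoles_lt_iff y t).1 hpoles
  rw [secularFun_barrierPoles] at hroot
  have hsum : 1 - ∑ i, 1 / (t - y i) = 1 / t := by linarith
  refine ⟨fun i => 1 / (t - y i), ⟨fun i => one_div_pos.2 (sub_pos.2 (hyt i)), ?_⟩, ?_⟩
  · linarith [one_div_pos.2 ht]
  · funext i
    simp only [simplexBarrierGrad, hsum, one_div_one_div]
    ring

lemma simplexBarrierGrad_bijOn :
    Set.BijOn (simplexBarrierGrad (ι := ι)) openSimplex Set.univ :=
  ⟨Set.mapsTo_univ _ _, simplexBarrierGrad_injOn, simplexBarrierGrad_surjOn⟩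

end Simplex

end

/-- The gradient of the log-barrier of the simplex is a bijection from the open
simplex onto `ℝ^d`: for every `y ∈ ℝ^d` there is a unique `x` in the open
simplex with `yᵢ = −1/xᵢ + 1/(1 − Σⱼ xⱼ)` for all `i`. -/
theorem stmt11 (d : ℕ) (y : Fin d → ℝ) :
    ∃! x : Fin d → ℝ, (∀ i, 0 < x i) ∧ (∑ i, x i) < 1 ∧
      ∀ i, y i = -(1 / x i) + 1 / (1 - ∑ j, x j) := by
  obtain ⟨x, hx, hxy⟩ := simplexBarrierGrad_bijOn.surjOn (Set.mem_univ y)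
  refine ⟨x, ⟨hx.1, hx.2, fun i => (congrFun hxy i).symm⟩, fun x' hx' => ?_⟩
  refine simplexBarrierGrad_bijOn.injOn ⟨hx'.1, hx'.2.1⟩ hx (funext fun i => ?_)
  rw [hxy]
  exact (hx'.2.2 i).symm
end

section
/- Let d ≥ 1, let a ∈ ℝ^{d+1} satisfy a_i > 0 for all i ∈ {1,…,d+1}, and let x ∈ ℝ^d satisfy x_i > 0 for all i and Σ_{i=1}^d x_i < 1. Let H(x) be the d×d matrix diag(1/x_1²,…,1/x_d²) + (1 − Σ_{j=1}^d x_j)^{−2}·𝟙𝟙ᵀ, where 𝟙 ∈ ℝ^d is the all-ones vector, and let g(x) ∈ ℝ^d have entries g(x)_i = −a_i/x_i + a_{d+1}/(1 − Σ_{j=1}^d x_j). Then H(x) is positive definite and g(x)ᵀ H(x)^{−1} g(x) ≤ ‖a‖², where ‖a‖ denotes the Euclidean norm of a in ℝ^{d+1}. -/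
/-!
Write `s = 1 - ∑ x`. The quadratic form of `H(x)` is `vᵀ H v = ∑ (vᵢ / xᵢ)² + (∑ v / s)²`, the
squared norm of `p = (v / x, ∑ v / s) ∈ ℝ^{d+1}`, while `g ⬝ v = ⟨b, p⟩` for
`b = (-a₁, …, -a_d, a_{d+1})`, which has norm `‖a‖`. Cauchy–Schwarz gives
`(g ⬝ v)² ≤ ‖a‖² vᵀ H v`, and testing this at `v = H⁻¹ g` gives `gᵀ H⁻¹ g ≤ ‖a‖²`.
-/

open Matrix

section
variable {n : Type*} [Fintype n] [DecidableEq n]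

theorem Matrix.posDef_diagonal_add_smul_of_one {w : n → ℝ} (hw : ∀ i, 0 < w i) {c : ℝ}
    (hc : 0 ≤ c) : (diagonal w + c • of fun _ _ : n => (1 : ℝ)).PosDef := by
  have hones : (of fun _ _ : n => (1 : ℝ)) = vecMulVec 1 (star 1) := by
    ext i j; simp [vecMulVec]
  exact (posDef_diagonal_iff.mpr hw).add_posSemidef
    (hones ▸ (posSemidef_vecMulVec_self_star 1).smul hc)

theorem Matrix.dotProduct_diagonal_add_smul_of_one_mulVec {R : Type*} [CommRing R]
    (w : n → R) (c : R) (v : n → R) :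
    v ⬝ᵥ ((diagonal w + c • of fun _ _ : n => (1 : R)) *ᵥ v)
      = ∑ i, w i * v i ^ 2 + c * (∑ i, v i) ^ 2 := by
  rw [add_mulVec, smul_mulVec, dotProduct_add, dotProduct_smul, smul_eq_mul]
  simp only [dotProduct, mulVec_diagonal]
  simp only [mulVec, dotProduct, of_apply, one_mul, ← Finset.sum_mul, sq]
  exact congrArg (· + _) (Finset.sum_congr rfl fun i _ => by ring)

theorem Matrix.dotProduct_inv_mulVec_le {H : Matrix n n ℝ} (hH : IsUnit H.det) {g : n → ℝ}
    {C : ℝ} (hC : 0 ≤ C) (h : ∀ v, (g ⬝ᵥ v) ^ 2 ≤ C * (v ⬝ᵥ (H *ᵥ v))) :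
    g ⬝ᵥ (H⁻¹ *ᵥ g) ≤ C := by
  set q := g ⬝ᵥ (H⁻¹ *ᵥ g)
  have hq : q ^ 2 ≤ C * q := by
    have hHu : H *ᵥ (H⁻¹ *ᵥ g) = g := by
      rw [mulVec_mulVec, mul_nonsing_inv H hH, one_mulVec]
    simpa [hHu, dotProduct_comm _ g] using h (H⁻¹ *ᵥ g)
  nlinarith
end

theorem sq_dotProduct_dirichlet_gradient_le {d : ℕ} (a : EuclideanSpace ℝ (Fin (d + 1)))
    (x : Fin d → ℝ) (s : ℝ) (v : Fin d → ℝ) :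
    ((fun i => -(a i.castSucc) / x i + a (Fin.last d) / s) ⬝ᵥ v) ^ 2
      ≤ ‖a‖ ^ 2 * (∑ i, 1 / x i ^ 2 * v i ^ 2 + (s ^ 2)⁻¹ * (∑ i, v i) ^ 2) := by
  let b : Fin (d + 1) → ℝ := Fin.snoc (fun i => -a i.castSucc) (a (Fin.last d))
  let p : Fin (d + 1) → ℝ := Fin.snoc (fun i => v i / x i) ((∑ i, v i) / s)
  have hbp : (fun i => -(a i.castSucc) / x i + a (Fin.last d) / s) ⬝ᵥ v = ∑ j, b j * p j := by
    simp only [Fin.sum_univ_castSucc, b, p, Fin.snoc_castSucc, Fin.snoc_last, dotProduct,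
      add_mul, Finset.sum_add_distrib, ← Finset.mul_sum]
    congr 1
    · exact Finset.sum_congr rfl fun i _ => by ring
    · ring
  have hb : ∑ j, b j ^ 2 = ‖a‖ ^ 2 := by
    simp [EuclideanSpace.real_norm_sq_eq, Fin.sum_univ_castSucc, b]
  have hp : ∑ j, p j ^ 2 = ∑ i, 1 / x i ^ 2 * v i ^ 2 + (s ^ 2)⁻¹ * (∑ i, v i) ^ 2 := by
    simp only [Fin.sum_univ_castSucc, p, Fin.snoc_castSucc, Fin.snoc_last]
    congr 1
    · exact Finset.sum_congr rfl fun i _ => by ring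
    · ring
  rw [hbp, ← hb, ← hp]
  exact Finset.sum_mul_sq_le_sq_mul_sq _ _ _

theorem stmt14_general (d : ℕ) (a : EuclideanSpace ℝ (Fin (d + 1)))
    (x : Fin d → ℝ) (hx : ∀ i, 0 < x i) :
    (Matrix.diagonal (fun i => 1 / (x i) ^ 2)
        + ((1 - ∑ j, x j) ^ 2)⁻¹ • Matrix.of (fun _ _ : Fin d => (1 : ℝ))).PosDef ∧
    (fun i : Fin d => -(a i.castSucc) / x i + a (Fin.last d) / (1 - ∑ j, x j)) ⬝ᵥ
        ((Matrix.diagonal (fun i => 1 / (x i) ^ 2)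
          + ((1 - ∑ j, x j) ^ 2)⁻¹ • Matrix.of (fun _ _ : Fin d => (1 : ℝ)))⁻¹ *ᵥ
        (fun i : Fin d => -(a i.castSucc) / x i + a (Fin.last d) / (1 - ∑ j, x j)))
      ≤ ‖a‖ ^ 2 := by
  have hH := posDef_diagonal_add_smul_of_one (fun i => one_div_pos.mpr (pow_pos (hx i) 2))
    (inv_nonneg.mpr (sq_nonneg (1 - ∑ j, x j)))
  refine ⟨hH, dotProduct_inv_mulVec_le ((isUnit_iff_isUnit_det _).mp hH.isUnit)
    (sq_nonneg ‖a‖) fun v => ?_⟩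
  rw [dotProduct_diagonal_add_smul_of_one_mulVec]
  exact sq_dotProduct_dirichlet_gradient_le a x _ v

/-- On the open simplex, the Hessian `H(x)` of the log-barrier is positive
definite, and the gradient `g(x)` of the Dirichlet potential satisfies
`g(x)ᵀ H(x)⁻¹ g(x) ≤ ‖a‖²`: the Dirichlet potential is `‖a‖`-relatively
Lipschitz with respect to the log-barrier. -/
theorem stmt14 (d : ℕ) (hd : 1 ≤ d) (a : EuclideanSpace ℝ (Fin (d + 1)))
    (ha : ∀ i, 0 < a i) (x : Fin d → ℝ) (hx : ∀ i, 0 < x i)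
    (hsum : ∑ i, x i < 1) :
    (Matrix.diagonal (fun i => 1 / (x i) ^ 2)
        + ((1 - ∑ j, x j) ^ 2)⁻¹ • Matrix.of (fun _ _ : Fin d => (1 : ℝ))).PosDef ∧
    (fun i : Fin d => -(a i.castSucc) / x i + a (Fin.last d) / (1 - ∑ j, x j)) ⬝ᵥ
        ((Matrix.diagonal (fun i => 1 / (x i) ^ 2)
          + ((1 - ∑ j, x j) ^ 2)⁻¹ • Matrix.of (fun _ _ : Fin d => (1 : ℝ)))⁻¹ *ᵥ
        (fun i : Fin d => -(a i.castSucc) / x i + a (Fin.last d) / (1 - ∑ j, x j)))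
      ≤ ‖a‖ ^ 2 :=
  stmt14_general d a x hx
end
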